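/- Let T_Q be a positive semidefinite multi-Toeplitz operator matrix with entries (T_Q)_{ij} = Q_{i-j} \otimes I_d^{\otimes \min(i,j)} (where Q_{-k} = Q_k^*), acting on H_0 \oplus H_1 \oplus H_2 \oplus \cdots with H_k = H \otimes (\mathbb{C}^d)^{\otimes k}. Then the Schur complements S(m) supported on the first m+1 rows and columns satisfy the recurrence S(m) = [[A, B^*],[B, S(m-1) \otimes I_d]] for some operators A: H_0 \to H_0 and B. -/

import Mathlib

open scoped ComplexOrder
open ContinuousLinearMap

/-- `S` is the Schur complement of `M` supported on the range of the orthogonal projection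
`P`: `S` is positive, supported on `ran P`, `M - S ≥ 0`, and `S` is the largest such. -/
def IsSchurCompl {K : Type*} [NormedAddCommGroup K] [InnerProductSpace ℂ K]
    (M P S : K →L[ℂ] K) : Prop :=
  (∀ x, 0 ≤ (inner ℂ (S x) x : ℂ)) ∧ P ∘L S ∘L P = S ∧
  (∀ x, 0 ≤ (inner ℂ ((M - S) x) x : ℂ)) ∧
  ∀ S' : K →L[ℂ] K, (∀ x, 0 ≤ (inner ℂ (S' x) x : ℂ)) → P ∘L S' ∘L P = S' →
    (∀ x, 0 ≤ (inner ℂ ((M - S') x) x : ℂ)) →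
    ∀ x, (inner ℂ (S' x) x : ℂ).re ≤ (inner ℂ (S x) x : ℂ).re

open scoped InnerProductSpace

/-!
Let `R j` append the letter `j` to words. The multi-Toeplitz structure says
`R k† T R j = δ_{jk} T`, and `P 0 + ∑ k, R k R k† = 1`, so on `ker P₀` the form of `T` splits as
`⟪T z, z⟫ = ∑ k ⟪T (R k† z), R k† z⟫`. The form of a Schur complement is a constrained infimum,
`⟪S(m) u, u⟫ = inf {⟪T (u + y), u + y⟫ | P m y = 0}` (the hard half uses a square root of
`T - S(m)` and the maximality of `S(m)`). As `R k†` maps `ker P (m+1)` into `ker P m`, this gives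
`∑ k ⟪S(m) (R k† u), R k† u⟫ ≤ ⟪S(m+1) u, u⟫` whenever `P 0 u = 0`. On the other hand
`R j† S(m+1) R j` competes in the maximality defining `S(m)`, hence `R j† S(m+1) R j = S(m)`.
Feeding `u = R j a + R j' b` into the inequality then leaves `0 ≤ re ⟪S(m+1) (R j a), R j' b⟫`
for all `a`, which forces the off-diagonal blocks to vanish.
-/

section SchurComplement

variable {E : Type*} [NormedAddCommGroup E] [InnerProductSpace ℂ E]

theorem ContinuousLinearMap.nonneg_iff_forall_inner_nonneg (A : E →L[ℂ] E) :
    0 ≤ A ↔ ∀ x, 0 ≤ ⟪A x, x⟫_ℂ := by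
  rw [nonneg_iff_isPositive, isPositive_iff]
  refine ⟨And.right, fun h => ⟨?_, h⟩⟩
  rw [LinearMap.isSymmetric_iff_inner_map_self_real]
  exact fun x => Complex.conj_eq_iff_im.mpr (Complex.nonneg_iff.mp (h x)).2.symm

theorem LinearMap.inner_eq_zero_of_forall_re_nonneg {V : Type*} [AddCommGroup V] [Module ℂ V]
    (A : V →ₗ[ℂ] E) (x : E) (h : ∀ a, 0 ≤ (⟪A a, x⟫_ℂ).re) (a : V) : ⟪A a, x⟫_ℂ = 0 := by
  have hre := h (-a)
  have him := h (Complex.I • a)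
  have him' := h (-(Complex.I • a))
  simp only [map_neg, map_smul, inner_neg_left, inner_smul_left, Complex.neg_re,
    Complex.conj_I, Complex.mul_re, Complex.neg_im, Complex.I_re, Complex.I_im] at hre him him'
  apply Complex.ext <;> simp only [Complex.zero_re, Complex.zero_im] <;> linarith [h a]

variable {M P S : E →L[ℂ] E}

theorem IsSchurCompl.nonneg (hS : IsSchurCompl M P S) : 0 ≤ S :=
  (nonneg_iff_forall_inner_nonneg S).mpr hS.1

theorem IsSchurCompl.compress_eq (hS : IsSchurCompl M P S) : P * S * P = S := by
  rw [mul_assoc]; exact hS.2.1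

variable [CompleteSpace E]

theorem IsSchurCompl.le (hS : IsSchurCompl M P S) : S ≤ M :=
  sub_nonneg.mp ((nonneg_iff_forall_inner_nonneg _).mpr hS.2.2.1)

theorem IsSelfAdjoint.re_inner_add_apply_add {A : E →L[ℂ] E} (hA : IsSelfAdjoint A) (x y : E) :
    (⟪A (x + y), x + y⟫_ℂ).re =
      (⟪A x, x⟫_ℂ).re + (⟪A y, y⟫_ℂ).re + 2 * (⟪A x, y⟫_ℂ).re := by
  have : (⟪A y, x⟫_ℂ).re = (⟪A x, y⟫_ℂ).re := by
    rw [← hA.adjoint_eq, adjoint_inner_left, hA.adjoint_eq, ← inner_conj_symm, Complex.conj_re]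
  simp only [map_add, inner_add_left, inner_add_right, Complex.add_re, this]
  ring

theorem ContinuousLinearMap.le_iff_re_inner_le {A B : E →L[ℂ] E} (hA : IsSelfAdjoint A)
    (hB : IsSelfAdjoint B) : A ≤ B ↔ ∀ x, (⟪A x, x⟫_ℂ).re ≤ (⟪B x, x⟫_ℂ).re := by
  simp only [le_def, isPositive_def', hB.sub hA, true_and, reApplyInnerSelf_apply, sub_apply,
    inner_sub_left, map_sub, sub_nonneg, RCLike.re_to_complex]

theorem ContinuousLinearMap.inner_star_mul_self_apply (A : E →L[ℂ] E) (z : E) :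
    ⟪(star A * A) z, z⟫_ℂ = (‖A z‖ ^ 2 : ℝ) := by
  rw [mul_apply_eq_comp, star_eq_adjoint, adjoint_inner_left,
    inner_self_eq_norm_sq_to_K]
  norm_cast

theorem IsSchurCompl.le_of_le (hS : IsSchurCompl M P S) {S' : E →L[ℂ] E}
    (hS'0 : 0 ≤ S') (hS'P : P * S' * P = S') (hS'M : S' ≤ M) : S' ≤ S := by
  rw [le_iff_re_inner_le hS'0.isSelfAdjoint hS.nonneg.isSelfAdjoint]
  exact hS.2.2.2 S' ((nonneg_iff_forall_inner_nonneg S').mp hS'0) (by rwa [mul_assoc] at hS'P)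
    ((nonneg_iff_forall_inner_nonneg _).mp (sub_nonneg.mpr hS'M))

theorem IsSchurCompl.inner_add_of_map_eq_zero (hS : IsSchurCompl M P S) (hP : IsSelfAdjoint P)
    (u : E) {y : E} (hy : P y = 0) : ⟪S (u + y), u + y⟫_ℂ = ⟪S u, u⟫_ℂ := by
  have h : ∀ z, ⟪S z, z⟫_ℂ = ⟪S (P z), P z⟫_ℂ := fun z => by
    conv_lhs => rw [← hS.2.1]
    rw [comp_apply, comp_apply, ← hP.adjoint_eq, adjoint_inner_left, hP.adjoint_eq]
  rw [h, map_add, hy, add_zero, ← h]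

theorem IsSchurCompl.re_inner_le (hS : IsSchurCompl M P S) (hP : IsSelfAdjoint P)
    (u : E) {y : E} (hy : P y = 0) : (⟪S u, u⟫_ℂ).re ≤ (⟪M (u + y), u + y⟫_ℂ).re := by
  have h := (Complex.nonneg_iff.mp (hS.2.2.1 (u + y))).1
  rw [sub_apply, inner_sub_left, Complex.sub_re, hS.inner_add_of_map_eq_zero hP u hy] at h
  linarith

theorem IsSchurCompl.eq_zero_of_le_sub (hS : IsSchurCompl M P S)
    {R : E →L[ℂ] E} (hR : 0 ≤ R) (hRP : P * R * P = R) (hRM : R ≤ M - S) : R = 0 := by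
  have hSR : S + R ≤ S := hS.le_of_le (add_nonneg hS.nonneg hR)
    (by rw [mul_add, add_mul, hS.compress_eq, hRP]) (le_sub_iff_add_le'.mp hRM)
  exact le_antisymm (by simpa using hSR) hR

/-- With `K` the closure of `A (ker P)`, the operator `B = (1 - proj_K) A` kills `ker P`, so
`B† B ≤ A† A = M - S` is supported on `ran P`; maximality of `S` forces `B = 0`. -/
theorem IsSchurCompl.apply_mem_closure_map_ker (hS : IsSchurCompl M P S) (hP : IsSelfAdjoint P)
    (hPP : IsIdempotentElem P) {A : E →L[ℂ] E} (hA : M - S = star A * A) (u : E) :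
    A u ∈ closure ((LinearMap.ker (P : E →ₗ[ℂ] E)).map (A : E →ₗ[ℂ] E) : Set E) := by
  set K := ((LinearMap.ker (P : E →ₗ[ℂ] E)).map (A : E →ₗ[ℂ] E)).topologicalClosure
  have : CompleteSpace K := (Submodule.isClosed_topologicalClosure _).completeSpace_coe
  have hQ : IsStarProjection (1 - K.starProjection) := isStarProjection_starProjection.one_sub
  set B := (1 - K.starProjection) * A
  have hBP : B * P = B := by
    refine ContinuousLinearMap.ext fun z => ?_
    have hz : A (z - P z) ∈ K := Submodule.le_topologicalClosure _
      ⟨z - P z, by simp [← mul_apply_eq_comp, hPP.eq], rfl⟩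
    have : B (z - P z) = 0 := by
      rw [mul_apply_eq_comp, sub_apply, one_apply_eq_self,
        Submodule.starProjection_eq_self_iff.mpr hz, sub_self]
    rwa [map_sub, sub_eq_zero, eq_comm, ← mul_apply_eq_comp] at this
  have hBB : star B * B = star A * (1 - K.starProjection) * A := by
    simp only [B, star_mul, hQ.isSelfAdjoint.star_eq]
    rw [mul_assoc, ← mul_assoc (1 - _), hQ.isIdempotentElem.eq, mul_assoc]
  have hB : star B * B = 0 := hS.eq_zero_of_le_sub (star_mul_self_nonneg B)
    (by conv_rhs => rw [← hBP]
        rw [star_mul B P, hP.star_eq]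
        simp only [mul_assoc])
    (by
      rw [hA, hBB]
      simpa using star_left_conjugate_le_conjugate
        (sub_le_self 1 (isStarProjection_starProjection (U := K)).nonneg) A)
  have hAu := congrArg (· u) (CStarRing.star_mul_self_eq_zero_iff B |>.mp hB)
  simp only [B, mul_apply_eq_comp, sub_apply, one_apply_eq_self, zero_apply, sub_eq_zero] at hAu
  rw [← Submodule.topologicalClosure_coe, SetLike.mem_coe, ← Submodule.starProjection_eq_self_iff]
  exact hAu.symm

theorem IsSchurCompl.exists_re_inner_lt (hS : IsSchurCompl M P S) (hP : IsSelfAdjoint P)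
    (hPP : IsIdempotentElem P) (u : E) {ε : ℝ} (hε : 0 < ε) :
    ∃ y, P y = 0 ∧ (⟪M (u + y), u + y⟫_ℂ).re < (⟪S u, u⟫_ℂ).re + ε := by
  obtain ⟨A, hA⟩ := CStarAlgebra.nonneg_iff_eq_star_mul_self.mp (sub_nonneg.mpr hS.le)
  obtain ⟨_, ⟨y, hy, rfl⟩, hdist⟩ :=
    Metric.mem_closure_iff.mp (hS.apply_mem_closure_map_ker hP hPP hA u) (√ε) (by positivity)
  have hy' : P (-y) = 0 := by simpa using hy
  refine ⟨-y, hy', ?_⟩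
  have hdef : (⟪(M - S) (u + -y), u + -y⟫_ℂ).re = ‖A u - A y‖ ^ 2 := by
    rw [hA, inner_star_mul_self_apply, Complex.ofReal_re, map_add, map_neg, ← sub_eq_add_neg]
  rw [sub_apply, inner_sub_left, Complex.sub_re, hS.inner_add_of_map_eq_zero hP u hy'] at hdef
  rw [dist_eq_norm, ContinuousLinearMap.coe_coe] at hdist
  nlinarith [Real.sq_sqrt hε.le, norm_nonneg (A u - A y)]

end SchurComplement

theorem Function.rpow_norm_extend_zero {α β E : Type*} [NormedAddCommGroup E] (g : α → β)
    (f : α → E) {r : ℝ} (hr : r ≠ 0) :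
    (fun b => ‖Function.extend g f 0 b‖ ^ r) = Function.extend g (fun a => ‖f a‖ ^ r) 0 := by
  funext b
  rw [Function.apply_extend (fun e : E => ‖e‖ ^ r)]
  congr 1
  funext
  simp [Real.zero_rpow hr]

theorem List.exists_append_singleton_eq_append_iff {α : Type*} (v w : List α) (j k : α) :
    (∃ u, w ++ [k] = u ++ (v ++ [j])) ↔ k = j ∧ ∃ u, w = u ++ v := by
  simp only [← List.append_assoc, List.append_singleton_inj]
  tauto

abbrev WordSpace (d : ℕ) (H : Type*) [NormedAddCommGroup H] : Type _ :=
  lp (fun _ : List (Fin d) => H) 2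

namespace WordSpace

variable {d : ℕ} {H : Type*} [NormedAddCommGroup H]

theorem memℓp_extend_append_singleton (j : Fin d) (f : WordSpace d H) :
    Memℓp (Function.extend (· ++ [j]) (f : List (Fin d) → H) 0) 2 := by
  have hp : (0 : ℝ) < (2 : ENNReal).toReal := by norm_num
  rw [memℓp_gen_iff hp, Function.rpow_norm_extend_zero _ _ hp.ne',
    summable_extend_zero (List.append_left_injective [j])]
  exact (memℓp_gen_iff hp).mp f.2

noncomputable def rightShiftAux (j : Fin d) (f : WordSpace d H) : WordSpace d H :=
  ⟨_, memℓp_extend_append_singleton j f⟩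

@[simp]
theorem coe_rightShiftAux (j : Fin d) (f : WordSpace d H) :
    (rightShiftAux j f : List (Fin d) → H) = Function.extend (· ++ [j]) f 0 :=
  rfl

theorem norm_rightShiftAux (j : Fin d) (f : WordSpace d H) : ‖rightShiftAux j f‖ = ‖f‖ := by
  have hp : (0 : ℝ) < (2 : ENNReal).toReal := by norm_num
  rw [lp.norm_eq_tsum_rpow hp, lp.norm_eq_tsum_rpow hp]
  congr 1
  exact (congrArg tsum (Function.rpow_norm_extend_zero _ _ hp.ne')).trans
    (tsum_extend_zero (List.append_left_injective [j]) _)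

variable [InnerProductSpace ℂ H]

variable (H) in
noncomputable def rightShift (j : Fin d) : WordSpace d H →L[ℂ] WordSpace d H :=
  LinearMap.mkContinuous
    { toFun := rightShiftAux j
      map_add' f g := lp.ext <| by
        simp only [coe_rightShiftAux, lp.coeFn_add]
        convert Function.extend_add (· ++ [j]) (f : List (Fin d) → H) g 0 0
        simp
      map_smul' c f := lp.ext <| by simpa using Function.extend_smul c (· ++ [j]) f 0 }
    1 fun f => by rw [one_mul, LinearMap.coe_mk, AddHom.coe_mk, norm_rightShiftAux]

theorem rightShift_single (j : Fin d) (v : List (Fin d)) (x : H) :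
    rightShift H j (lp.single 2 v x) = lp.single 2 (v ++ [j]) x := by
  refine lp.ext <| funext fun w => ?_
  show Function.extend (· ++ [j]) (lp.single 2 v x : List (Fin d) → H) 0 w = _
  by_cases hw : ∃ u, u ++ [j] = w
  · obtain ⟨u, rfl⟩ := hw
    rw [(List.append_left_injective [j]).extend_apply]
    by_cases huv : u = v
    · subst huv; simp
    · rw [lp.single_apply_ne _ _ _ huv, lp.single_apply_ne]
      exact fun h => huv (List.append_left_injective [j] h)
  · rw [Function.extend_apply' _ _ _ hw, lp.single_apply_ne, Pi.zero_apply]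
    rintro rfl
    exact hw ⟨v, rfl⟩

theorem inner_single_single (v w : List (Fin d)) (x y : H) :
    ⟪(lp.single 2 v x : WordSpace d H), lp.single 2 w y⟫_ℂ = if v = w then ⟪x, y⟫_ℂ else 0 := by
  rw [lp.inner_single_left, lp.single_apply]
  split_ifs with h
  · subst h; simp
  · simp [Ne.symm h]

theorem ext_inner_single {a b : WordSpace d H}
    (h : ∀ w y, ⟪a, lp.single 2 w y⟫_ℂ = ⟪b, lp.single 2 w y⟫_ℂ) : a = b :=
  lp.ext <| funext fun w => ext_inner_right ℂ fun y => by
    simpa only [lp.inner_single_right] using h w y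

theorem ext_inner_single_single {A B : WordSpace d H →L[ℂ] WordSpace d H}
    (h : ∀ v x w y, ⟪A (lp.single 2 v x), lp.single 2 w y⟫_ℂ =
      ⟪B (lp.single 2 v x), lp.single 2 w y⟫_ℂ) : A = B :=
  lp.ext_continuousLinearMap (by norm_num) fun v =>
    ContinuousLinearMap.ext fun x => ext_inner_single (h v x)

def IsLengthTruncation (P : ℕ → (WordSpace d H →L[ℂ] WordSpace d H)) : Prop :=
  ∀ m w x, P m (lp.single 2 w x) = if w.length ≤ m then lp.single 2 w x else 0

namespace IsLengthTruncation

variable {P : ℕ → (WordSpace d H →L[ℂ] WordSpace d H)} (hP : IsLengthTruncation P)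
include hP

theorem isIdempotentElem (m : ℕ) : IsIdempotentElem (P m) := by
  refine ext_inner_single_single fun w x _ _ => ?_
  by_cases h : w.length ≤ m <;> simp [mul_apply_eq_comp, hP m, h]

theorem mul_rightShift (m : ℕ) (j : Fin d) : P (m + 1) * rightShift H j = rightShift H j * P m := by
  refine ext_inner_single_single fun w x _ _ => ?_
  by_cases h : w.length ≤ m <;> simp [mul_apply_eq_comp, hP m, hP (m + 1), rightShift_single, h]

theorem apply_zero_eq_zero {m : ℕ} {y : WordSpace d H} (hy : P m y = 0) : P 0 y = 0 := by
  have : P 0 * P m = P 0 := ext_inner_single_single fun w x _ _ => by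
    by_cases h : w.length ≤ m
    · simp [mul_apply_eq_comp, hP 0, hP m, h]
    · have hw : w ≠ [] := by rintro rfl; simp at h
      simp [mul_apply_eq_comp, hP 0, hP m, h, hw]
  rw [← this, mul_apply_eq_comp, hy, map_zero]

theorem apply_rightShift (j : Fin d) (a : WordSpace d H) : P 0 (rightShift H j a) = 0 := by
  have : P 0 * rightShift H j = 0 := ext_inner_single_single fun w x _ _ => by
    simp [mul_apply_eq_comp, hP 0, rightShift_single]
  rw [← mul_apply_eq_comp, this, zero_apply]

end IsLengthTruncation

variable [CompleteSpace H]

theorem inner_star_apply (A : WordSpace d H →L[ℂ] WordSpace d H) (a b : WordSpace d H) :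
    ⟪star A a, b⟫_ℂ = ⟪a, A b⟫_ℂ := by
  rw [star_eq_adjoint, adjoint_inner_left]

theorem star_rightShift_mul_rightShift (j k : Fin d) :
    star (rightShift H k) * rightShift H j = if j = k then 1 else 0 := by
  refine ext_inner_single_single fun v x w y => ?_
  rw [mul_apply_eq_comp, inner_star_apply, rightShift_single, rightShift_single,
    inner_single_single]
  by_cases hjk : j = k <;> simp [hjk, inner_single_single, List.append_singleton_inj]

theorem star_rightShift_rightShift_apply (j k : Fin d) (a : WordSpace d H) :
    star (rightShift H k) (rightShift H j a) = if j = k then a else 0 := by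
  rw [← mul_apply_eq_comp, star_rightShift_mul_rightShift]
  split_ifs <;> rfl

theorem star_rightShift_single_nil (k : Fin d) (x : H) :
    star (rightShift H k) (lp.single 2 [] x : WordSpace d H) = 0 := by
  refine ext_inner_single fun w y => ?_
  rw [inner_star_apply, rightShift_single, inner_single_single, if_neg (by simp), inner_zero_left]

namespace IsLengthTruncation

variable {P : ℕ → (WordSpace d H →L[ℂ] WordSpace d H)} (hP : IsLengthTruncation P)
include hP

theorem isSelfAdjoint (m : ℕ) : IsSelfAdjoint (P m) := by
  refine ext_inner_single_single fun v x w y => ?_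
  rw [inner_star_apply, hP, hP]
  by_cases hvw : v = w
  · subst hvw; split_ifs <;> simp
  · split_ifs <;> simp [inner_single_single, hvw]

theorem star_rightShift_mul (m : ℕ) (j : Fin d) :
    star (rightShift H j) * P (m + 1) = P m * star (rightShift H j) := by
  simpa [(hP.isSelfAdjoint _).star_eq] using congrArg star (hP.mul_rightShift m j)

theorem zero_add_sum_rightShift_mul_star :
    P 0 + ∑ k, rightShift H k * star (rightShift H k) = 1 := by
  refine lp.ext_continuousLinearMap (by norm_num) fun w => ContinuousLinearMap.ext fun x => ?_
  rw [coe_comp, Function.comp_apply, add_apply, sum_apply]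
  induction w using List.reverseRecOn with
  | nil => simp [hP 0, mul_apply_eq_comp, star_rightShift_single_nil]
  | append_singleton u a _ =>
    simp [mul_apply_eq_comp, ← rightShift_single, star_rightShift_rightShift_apply,
      hP.apply_rightShift, apply_ite]

end IsLengthTruncation

theorem star_rightShift_mul_mul_rightShift {T : WordSpace d H →L[ℂ] WordSpace d H}
    {Q : List (Fin d) → H →L[ℂ] H}
    (hT1 : ∀ (u v : List (Fin d)) (x y : H),
      ⟪T (lp.single 2 v x), lp.single 2 (u ++ v) y⟫_ℂ = ⟪Q u x, y⟫_ℂ)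
    (hT2 : ∀ (u w : List (Fin d)) (x y : H),
      ⟪T (lp.single 2 (u ++ w) x), lp.single 2 w y⟫_ℂ = ⟪x, Q u y⟫_ℂ)
    (hT3 : ∀ v w : List (Fin d), (¬ ∃ u, w = u ++ v) → (¬ ∃ u, v = u ++ w) →
      ∀ x y : H, ⟪T (lp.single 2 v x), lp.single 2 w y⟫_ℂ = 0)
    (j k : Fin d) : star (rightShift H k) * T * rightShift H j = if j = k then T else 0 := by
  refine ext_inner_single_single fun v x w y => ?_
  rw [mul_apply_eq_comp, mul_apply_eq_comp, inner_star_apply, rightShift_single,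
    rightShift_single]
  split_ifs with hjk
  · subst hjk
    by_cases h1 : ∃ u, w = u ++ v
    · obtain ⟨u, rfl⟩ := h1
      rw [List.append_assoc, hT1, hT1]
    by_cases h2 : ∃ u, v = u ++ w
    · obtain ⟨u, rfl⟩ := h2
      rw [List.append_assoc, hT2, hT2]
    rw [hT3 v w h1 h2, hT3]
    · rwa [List.exists_append_singleton_eq_append_iff, and_iff_right rfl]
    · rwa [List.exists_append_singleton_eq_append_iff, and_iff_right rfl]
  · rw [zero_apply, inner_zero_left, hT3]
    · rw [List.exists_append_singleton_eq_append_iff]; exact fun h => hjk h.1.symm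
    · rw [List.exists_append_singleton_eq_append_iff]; exact fun h => hjk h.1

section SchurRecurrence

variable {T : WordSpace d H →L[ℂ] WordSpace d H} {P S : ℕ → (WordSpace d H →L[ℂ] WordSpace d H)}
  (hT : ∀ j k, star (rightShift H k) * T * rightShift H j = if j = k then T else 0)
  (hP : IsLengthTruncation P)
include hT hP

theorem inner_apply_self_eq_sum_of_apply_zero_eq_zero {z : WordSpace d H} (hz : P 0 z = 0) :
    ⟪T z, z⟫_ℂ = ∑ k, ⟪T (star (rightShift H k) z), star (rightShift H k) z⟫_ℂ := by
  have hsum : z = ∑ k, rightShift H k (star (rightShift H k) z) := by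
    simpa [hz, mul_apply_eq_comp] using
      (congrArg (· z) hP.zero_add_sum_rightShift_mul_star).symm
  have hentry : ∀ k l a b, ⟪T (rightShift H k a), rightShift H l b⟫_ℂ =
      if k = l then ⟪T a, b⟫_ℂ else 0 := fun k l a b => by
    rw [← inner_star_apply, ← mul_apply_eq_comp, ← mul_apply_eq_comp, hT]
    split_ifs <;> simp
  conv_lhs => rw [hsum]
  simp only [map_sum, sum_inner, inner_sum, hentry, Finset.sum_ite_eq', Finset.mem_univ, if_true]

variable (hS : ∀ m, IsSchurCompl T (P m) (S m))
include hS

theorem sum_re_inner_le_re_inner (n : ℕ) {u : WordSpace d H} (hu : P 0 u = 0) :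
    ∑ k, (⟪S n (star (rightShift H k) u), star (rightShift H k) u⟫_ℂ).re ≤
      (⟪S (n + 1) u, u⟫_ℂ).re := by
  refine le_of_forall_pos_lt_add fun ε hε => ?_
  obtain ⟨y, hy, hlt⟩ :=
    (hS (n + 1)).exists_re_inner_lt (hP.isSelfAdjoint _) (hP.isIdempotentElem _) u hε
  have hky : ∀ k, P n (star (rightShift H k) y) = 0 := fun k => by
    rw [← mul_apply_eq_comp, ← hP.star_rightShift_mul, mul_apply_eq_comp, hy, map_zero]
  have huy : P 0 (u + y) = 0 := by rw [map_add, hu, hP.apply_zero_eq_zero hy, add_zero]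
  calc ∑ k, (⟪S n (star (rightShift H k) u), star (rightShift H k) u⟫_ℂ).re
      ≤ ∑ k, (⟪T (star (rightShift H k) u + star (rightShift H k) y),
          star (rightShift H k) u + star (rightShift H k) y⟫_ℂ).re :=
        Finset.sum_le_sum fun k _ => (hS n).re_inner_le (hP.isSelfAdjoint n) _ (hky k)
    _ = (⟪T (u + y), u + y⟫_ℂ).re := by
        rw [inner_apply_self_eq_sum_of_apply_zero_eq_zero hT hP huy, Complex.re_sum]
        simp only [map_add]
    _ < _ := hlt

theorem star_rightShift_mul_schur_mul_rightShift_le (n : ℕ) (j : Fin d) :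
    star (rightShift H j) * S (n + 1) * rightShift H j ≤ S n := by
  refine (hS n).le_of_le (star_left_conjugate_nonneg (hS (n + 1)).nonneg _) ?_ ?_
  · calc P n * (star (rightShift H j) * S (n + 1) * rightShift H j) * P n
        = P n * star (rightShift H j) * S (n + 1) * (rightShift H j * P n) := by
          simp only [mul_assoc]
      _ = star (rightShift H j) * (P (n + 1) * S (n + 1) * P (n + 1)) * rightShift H j := by
          rw [← hP.star_rightShift_mul, ← hP.mul_rightShift]
          simp only [mul_assoc]
      _ = _ := by rw [(hS (n + 1)).compress_eq]
  · calc star (rightShift H j) * S (n + 1) * rightShift H j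
        ≤ star (rightShift H j) * T * rightShift H j :=
          star_left_conjugate_le_conjugate (hS (n + 1)).le _
      _ = T := by rw [hT, if_pos rfl]

theorem star_rightShift_mul_schur_mul_rightShift (n : ℕ) (j : Fin d) :
    star (rightShift H j) * S (n + 1) * rightShift H j = S n := by
  refine le_antisymm (star_rightShift_mul_schur_mul_rightShift_le hT hP hS n j)
    ((le_iff_re_inner_le (hS n).nonneg.isSelfAdjoint
      (star_left_conjugate_nonneg (hS (n + 1)).nonneg _).isSelfAdjoint).mpr fun a => ?_)
  have h := sum_re_inner_le_re_inner hT hP hS n (hP.apply_rightShift j a)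
  rw [Fintype.sum_eq_single j fun k hk => by
    simp [star_rightShift_rightShift_apply, Ne.symm hk]] at h
  simpa [star_rightShift_rightShift_apply, mul_apply_eq_comp, inner_star_apply] using h

theorem inner_schur_rightShift_rightShift_eq_zero (n : ℕ) {j j' : Fin d} (hjj : j ≠ j')
    (a b : WordSpace d H) : ⟪S (n + 1) (rightShift H j a), rightShift H j' b⟫_ℂ = 0 := by
  refine LinearMap.inner_eq_zero_of_forall_re_nonneg
    ((S (n + 1) * rightShift H j : WordSpace d H →L[ℂ] _) : WordSpace d H →ₗ[ℂ] _)
    (rightShift H j' b) (fun a => ?_) a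
  have hdiag : ∀ k c,
      (⟪S n c, c⟫_ℂ).re = (⟪S (n + 1) (rightShift H k c), rightShift H k c⟫_ℂ).re := fun k c => by
    rw [← star_rightShift_mul_schur_mul_rightShift hT hP hS n k, mul_apply_eq_comp,
      mul_apply_eq_comp, inner_star_apply]
  have h := sum_re_inner_le_re_inner hT hP hS n (u := rightShift H j a + rightShift H j' b)
    (by rw [map_add, hP.apply_rightShift, hP.apply_rightShift, add_zero])
  rw [Fintype.sum_eq_add j j' hjj fun k hk => by
    simp [star_rightShift_rightShift_apply, Ne.symm hk.1, Ne.symm hk.2]] at h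
  rw [(hS (n + 1)).nonneg.isSelfAdjoint.re_inner_add_apply_add] at h
  simp only [map_add, star_rightShift_rightShift_apply, if_pos, if_neg hjj, if_neg hjj.symm,
    add_zero, zero_add] at h
  rw [hdiag j a, hdiag j' b] at h
  rw [ContinuousLinearMap.coe_coe, mul_apply_eq_comp]
  linarith

end SchurRecurrence

end WordSpace

/-- `H₀ ⊕ H₁ ⊕ ⋯` is `ℓ²(List (Fin d), H)`, graded by word length; `hT1`–`hT3` give the blocks of
`T_Q`, and the factor `I_d` of `S(m-1) ⊗ I_d` is carried by the last letter. -/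
theorem stmt_12 (d : ℕ) {H : Type*}
    [NormedAddCommGroup H] [InnerProductSpace ℂ H] [CompleteSpace H]
    (Q : List (Fin d) → (H →L[ℂ] H))
    (T : lp (fun _ : List (Fin d) => H) 2 →L[ℂ] lp (fun _ : List (Fin d) => H) 2)
    (hT1 : ∀ (u v : List (Fin d)) (x y : H),
      (inner ℂ (T (lp.single 2 v x)) (lp.single 2 (u ++ v) y) : ℂ) = inner ℂ (Q u x) y)
    (hT2 : ∀ (u w : List (Fin d)) (x y : H),
      (inner ℂ (T (lp.single 2 (u ++ w) x)) (lp.single 2 w y) : ℂ) = inner ℂ x (Q u y))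
    (hT3 : ∀ (v w : List (Fin d)), (¬ ∃ u, w = u ++ v) → (¬ ∃ u, v = u ++ w) →
      ∀ (x y : H), (inner ℂ (T (lp.single 2 v x)) (lp.single 2 w y) : ℂ) = 0)
    (P : ℕ → (lp (fun _ : List (Fin d) => H) 2 →L[ℂ] lp (fun _ : List (Fin d) => H) 2))
    (hP : ∀ (m : ℕ) (w : List (Fin d)) (x : H),
      P m (lp.single 2 w x) = if w.length ≤ m then lp.single 2 w x else 0)
    (S : ℕ → (lp (fun _ : List (Fin d) => H) 2 →L[ℂ] lp (fun _ : List (Fin d) => H) 2))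
    (hS : ∀ m, IsSchurCompl T (P m) (S m)) :
    ∀ m : ℕ, 1 ≤ m → ∀ (j j' : Fin d) (v w : List (Fin d)) (x y : H),
      (inner ℂ (S m (lp.single 2 (v ++ [j]) x)) (lp.single 2 (w ++ [j']) y) : ℂ)
        = if j = j' then (inner ℂ (S (m - 1) (lp.single 2 v x)) (lp.single 2 w y) : ℂ)
          else 0 := by
  intro m hm j j' v w x y
  obtain ⟨n, rfl⟩ : ∃ n, m = n + 1 := ⟨m - 1, by omega⟩
  have hT := WordSpace.star_rightShift_mul_mul_rightShift hT1 hT2 hT3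
  rw [Nat.add_sub_cancel, ← WordSpace.rightShift_single, ← WordSpace.rightShift_single]
  split_ifs with hjj
  · subst hjj
    rw [← WordSpace.inner_star_apply, ← mul_apply_eq_comp, ← mul_apply_eq_comp,
      WordSpace.star_rightShift_mul_schur_mul_rightShift hT hP hS]
  · exact WordSpace.inner_schur_rightShift_rightShift_eq_zero hT hP hS n hjj _ _
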